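/- Each letter of a Sturmian word has exactly two semi-abelian returns (which coincide with its ordinary return words). -/

import Mathlib

/-!
Let `g` be the least distance between two consecutive occurrences of the letter `a`. If some
pair of consecutive occurrences `i < j` had `j - i ≥ g + 2`, then the windows of length `g + 1`
starting at `i`, at `j - k` for `1 ≤ k ≤ g`, at `i + 1` and at an occurrence followed by one at
distance `g` would contain `a` at the pairwise different offset sets `{0}`, `{k}`, `∅` and
`{0, g}`: these are `g + 3` distinct factors of length `g + 1`, against complexity `g + 2`.
If all gaps were equal to `g`, the word would be ultimately periodic, so both gaps `g` and
`g + 1` occur. A return word of `a` is `a` followed by non-`a`'s, so it is determined by its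
length, and a single letter occurs exactly where its abelian class does.
-/

/-- The factor of length `n` of the infinite word `w` starting at position `i`. -/
def wordAt {α : Type*} (w : ℕ → α) (i n : ℕ) : List α :=
  (List.range n).map (fun k => w (i + k))

/-- `u` is a factor of the infinite word `w`. -/
def IsFactorW {α : Type*} (w : ℕ → α) (u : List α) : Prop :=
  ∃ i, u = wordAt w i u.length

/-- `w` is recurrent: every factor occurs infinitely often. -/
def RecurrentW {α : Type*} (w : ℕ → α) : Prop :=
  ∀ u, IsFactorW w u → ∀ N, ∃ i, N ≤ i ∧ u = wordAt w i u.length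

/-- `w` is (purely) periodic. -/
def PeriodicW {α : Type*} (w : ℕ → α) : Prop :=
  ∃ T, 0 < T ∧ ∀ n, w (n + T) = w n

/-- `w` is ultimately periodic. -/
def UltPeriodicW {α : Type*} (w : ℕ → α) : Prop :=
  ∃ T, 0 < T ∧ ∃ n₀, ∀ n, n₀ ≤ n → w (n + T) = w n

/-- Two finite words are abelian equivalent: same number of occurrences of each letter. -/
def AbEquiv {α : Type*} [DecidableEq α] (u v : List α) : Prop :=
  ∀ a : α, u.count a = v.count a

/-- Positions of occurrences of words abelian equivalent to `u` in `w`. -/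
def abOcc {α : Type*} [DecidableEq α] (w : ℕ → α) (u : List α) : Set ℕ :=
  {i | AbEquiv (wordAt w i u.length) u}

/-- The semi-abelian returns to (the abelian class of) `u` in `w`: words extending from one
occurrence of the abelian class of `u` to the next one. -/
def semiAbReturns {α : Type*} [DecidableEq α] (w : ℕ → α) (u : List α) : Set (List α) :=
  {r | ∃ i j, i ∈ abOcc w u ∧ j ∈ abOcc w u ∧ i < j ∧
      (∀ k, i < k → k < j → k ∉ abOcc w u) ∧ r = wordAt w i (j - i)}

/-- Positions of (exact) occurrences of `u` in `w`. -/
def occW {α : Type*} [DecidableEq α] (w : ℕ → α) (u : List α) : Set ℕ :=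
  {i | u = wordAt w i u.length}

/-- The ordinary return words of `u` in `w`. -/
def returnWords {α : Type*} [DecidableEq α] (w : ℕ → α) (u : List α) : Set (List α) :=
  {r | ∃ i j, i ∈ occW w u ∧ j ∈ occW w u ∧ i < j ∧
      (∀ k, i < k → k < j → k ∉ occW w u) ∧ r = wordAt w i (j - i)}

/-- `u` has exactly `k` semi-abelian returns in `w`. -/
def ExactlyKSemiAbReturns {α : Type*} [DecidableEq α] (w : ℕ → α) (u : List α) (k : ℕ) : Prop :=
  ∃ f : Fin k → List α, Function.Injective f ∧ semiAbReturns w u = Set.range f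

/-- `u` has exactly `k` abelian returns in `w`: there are `k` pairwise non-abelian-equivalent
representatives so that every semi-abelian return is abelian equivalent to exactly one of them,
and each representative is realized. -/
def ExactlyKAbReturns {α : Type*} [DecidableEq α] (w : ℕ → α) (u : List α) (k : ℕ) : Prop :=
  ∃ f : Fin k → List α,
    (∀ i j, AbEquiv (f i) (f j) → i = j) ∧
    (∀ r ∈ semiAbReturns w u, ∃ i, AbEquiv r (f i)) ∧
    (∀ i, ∃ r ∈ semiAbReturns w u, AbEquiv r (f i))

/-- `u` has at most `k` abelian returns in `w`. -/
def AtMostKAbReturns {α : Type*} [DecidableEq α] (w : ℕ → α) (u : List α) (k : ℕ) : Prop :=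
  ∃ f : Fin k → List α, ∀ r ∈ semiAbReturns w u, ∃ i, AbEquiv r (f i)

/-- `u` has at least `k` abelian returns in `w`. -/
def AtLeastKAbReturns {α : Type*} [DecidableEq α] (w : ℕ → α) (u : List α) (k : ℕ) : Prop :=
  ∃ f : Fin k → List α,
    (∀ i j, AbEquiv (f i) (f j) → i = j) ∧
    (∀ i, ∃ r ∈ semiAbReturns w u, AbEquiv r (f i))

/-- `u` has at least two semi-abelian returns in `w`. -/
def AtLeastTwoSemiAbReturns {α : Type*} [DecidableEq α] (w : ℕ → α) (u : List α) : Prop :=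
  ∃ r₁ r₂, r₁ ∈ semiAbReturns w u ∧ r₂ ∈ semiAbReturns w u ∧ r₁ ≠ r₂

/-- The factor complexity of `w`. -/
noncomputable def complexityW {α : Type*} (w : ℕ → α) (n : ℕ) : ℕ :=
  {u : List α | u.length = n ∧ IsFactorW w u}.ncard

/-- A Sturmian word: aperiodic binary word with factor complexity `n + 1`. -/
def SturmianW (w : ℕ → Bool) : Prop :=
  ¬ UltPeriodicW w ∧ ∀ n, complexityW w n = n + 1

/-- Right special factor of a binary word. -/
def RightSpecial (w : ℕ → Bool) (B : List Bool) : Prop :=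
  IsFactorW w (B ++ [false]) ∧ IsFactorW w (B ++ [true])

/-- Left special factor of a binary word. -/
def LeftSpecial (w : ℕ → Bool) (B : List Bool) : Prop :=
  IsFactorW w (false :: B) ∧ IsFactorW w (true :: B)

/-- Bispecial factor of a binary word. -/
def Bispecial (w : ℕ → Bool) (B : List Bool) : Prop :=
  RightSpecial w B ∧ LeftSpecial w B

/-- `w` is `c`-balanced. -/
def CBalanced {α : Type*} [DecidableEq α] (w : ℕ → α) (c : ℕ) : Prop :=
  ∀ u v : List α, IsFactorW w u → IsFactorW w v → u.length = v.length →
    ∀ a : α, |((u.count a : ℤ) - (v.count a : ℤ))| ≤ (c : ℤ)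

section Words

variable {α : Type*} (w : ℕ → α)

@[simp]
theorem length_wordAt (i n : ℕ) : (wordAt w i n).length = n := by
  simp [wordAt]

theorem wordAt_eq_wordAt_iff {i j n : ℕ} :
    wordAt w i n = wordAt w j n ↔ ∀ k < n, w (i + k) = w (j + k) := by
  simp [wordAt, List.map_inj_left]

theorem wordAt_one (i : ℕ) : wordAt w i 1 = [w i] := by
  simp [wordAt]

theorem card_le_complexityW [Finite α] {ι : Type*} (pos : ι → ℕ) (s : Finset ι) (n : ℕ)
    (hinj : Set.InjOn (fun k => wordAt w (pos k) n) s) : s.card ≤ complexityW w n := by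
  classical
  rw [← Finset.card_image_of_injOn hinj, ← Set.ncard_coe_finset]
  refine Set.ncard_le_ncard ?_ ((List.finite_length_eq α n).subset fun u hu => hu.1)
  intro u hu
  obtain ⟨k, -, rfl⟩ := Finset.mem_image.mp hu
  exact ⟨length_wordAt w _ n, pos k, by rw [length_wordAt]⟩

end Words

section Occurrences

variable {α : Type*} (w : ℕ → α) (a : α)

def ConsecutiveOcc (i j : ℕ) : Prop :=
  w i = a ∧ w j = a ∧ i < j ∧ ∀ k, i < k → k < j → w k ≠ a

variable {w a} in
theorem ConsecutiveOcc.apply_eq_iff {i j k : ℕ} (h : ConsecutiveOcc w a i j) (hik : i ≤ k)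
    (hkj : k ≤ j) : w k = a ↔ k = i ∨ k = j := by
  refine ⟨fun hk => ?_, by rintro (rfl | rfl); exacts [h.1, h.2.1]⟩
  by_contra! hne
  exact h.2.2.2 k (by omega) (by omega) hk

variable [DecidableEq α]

theorem mem_occW_singleton (i : ℕ) : i ∈ occW w [a] ↔ w i = a := by
  simp [occW, wordAt_one, eq_comm]

theorem mem_abOcc_singleton (i : ℕ) : i ∈ abOcc w [a] ↔ w i = a := by
  refine ⟨fun h => ?_, fun h c => by rw [List.length_singleton, wordAt_one, h]⟩
  simpa [wordAt_one, List.count_singleton] using h a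

theorem semiAbReturns_singleton : semiAbReturns w [a] = returnWords w [a] := by
  have : abOcc w [a] = occW w [a] :=
    Set.ext fun i => by rw [mem_abOcc_singleton, mem_occW_singleton]
  simp only [semiAbReturns, returnWords, this]

theorem returnWords_singleton :
    returnWords w [a] = {r | ∃ i j, ConsecutiveOcc w a i j ∧ r = wordAt w i (j - i)} := by
  ext r
  simp [returnWords, mem_occW_singleton, ConsecutiveOcc, and_assoc]

def occOffsets (x n : ℕ) : Finset ℕ :=
  (Finset.range n).filter fun m => w (x + m) = a

@[simp]
theorem mem_occOffsets {x n m : ℕ} : m ∈ occOffsets w a x n ↔ m < n ∧ w (x + m) = a := by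
  simp [occOffsets]

theorem occOffsets_congr {x y n : ℕ} (h : wordAt w x n = wordAt w y n) :
    occOffsets w a x n = occOffsets w a y n := by
  rw [wordAt_eq_wordAt_iff] at h
  ext m
  simp only [mem_occOffsets]
  exact ⟨fun ⟨hm, hx⟩ => ⟨hm, h m hm ▸ hx⟩, fun ⟨hm, hy⟩ => ⟨hm, (h m hm).symm ▸ hy⟩⟩

theorem card_le_complexityW_of_injOn_occOffsets {ι : Type*} [Finite α] (pos : ι → ℕ)
    (s : Finset ι) (n : ℕ) (hinj : Set.InjOn (fun k => occOffsets w a (pos k) n) s) :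
    s.card ≤ complexityW w n :=
  card_le_complexityW w pos s n fun _ hk _ hk' h => hinj hk hk' (occOffsets_congr w a h)

end Occurrences

section Binary

variable {w : ℕ → Bool} {a : Bool}

theorem Bool.eq_of_eq_iff_eq {x y b : Bool} (h : x = b ↔ y = b) : x = y := by
  cases b <;> simpa using h

theorem exists_ge_apply_eq (hw : ¬ UltPeriodicW w) (a : Bool) (N : ℕ) : ∃ n, N ≤ n ∧ w n = a := by
  by_contra! h
  exact hw ⟨1, one_pos, N, fun n hn =>
    (Bool.eq_not_of_ne (h (n + 1) (by omega))).trans (Bool.eq_not_of_ne (h n hn)).symm⟩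

theorem exists_consecutiveOcc (hw : ¬ UltPeriodicW w) {i : ℕ} (hi : w i = a) :
    ∃ j, ConsecutiveOcc w a i j := by
  have hex : ∃ k, i < k ∧ w k = a := exists_ge_apply_eq hw a (i + 1)
  exact ⟨Nat.find hex, hi, (Nat.find_spec hex).2, (Nat.find_spec hex).1,
    fun k hik hkj hk => Nat.find_min hex hkj ⟨hik, hk⟩⟩

theorem ConsecutiveOcc.apply_add_eq_iff {i j m : ℕ} (h : ConsecutiveOcc w a i j) (hm : m < j - i) :
    w (i + m) = a ↔ m = 0 := by
  rw [h.apply_eq_iff (by omega) (by omega)]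
  omega

theorem ConsecutiveOcc.wordAt_eq {i j i' j' : ℕ} (h : ConsecutiveOcc w a i j)
    (h' : ConsecutiveOcc w a i' j') (hd : j - i = j' - i') :
    wordAt w i (j - i) = wordAt w i' (j' - i') := by
  rw [← hd, wordAt_eq_wordAt_iff]
  intro m hm
  exact Bool.eq_of_eq_iff_eq
    ((h.apply_add_eq_iff hm).trans (h'.apply_add_eq_iff (hd ▸ hm)).symm)

theorem ultPeriodicW_of_consecutiveOcc_add {g p : ℕ} (hg : 0 < g) (hp : w p = a)
    (h : ∀ i, p ≤ i → w i = a → ConsecutiveOcc w a i (i + g)) : UltPeriodicW w := by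
  refine ⟨g, hg, p, fun n hn => ?_⟩
  set i := Nat.findGreatest (fun k => w k = a) n
  have hi : w i = a := Nat.findGreatest_spec (P := fun k => w k = a) hn hp
  have hin : i ≤ n := Nat.findGreatest_le n
  have hpi : p ≤ i := Nat.le_findGreatest (P := fun k => w k = a) hn hp
  have hi₁ := h i hpi hi
  have hi₂ := h (i + g) (by omega) hi₁.2.1
  have hni : n < i + g := by
    by_contra! hle
    exact Nat.findGreatest_is_greatest (P := fun k => w k = a) (by omega) hle hi₁.2.1
  refine Bool.eq_of_eq_iff_eq (b := a) ?_
  rw [hi₂.apply_eq_iff (k := n + g) (by omega) (by omega),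
    hi₁.apply_eq_iff (k := n) (by omega) (by omega)]
  omega

end Binary

section Sturmian

variable {w : ℕ → Bool} {a : Bool} {g : ℕ}

def gapProfile (g k : ℕ) : Finset ℕ :=
  if k ≤ g then {k} else if k = g + 1 then ∅ else {0, g}

theorem injOn_gapProfile (hg : 0 < g) : Set.InjOn (gapProfile g) (Finset.range (g + 3)) := by
  intro k₁ h₁ k₂ h₂ h
  simp only [Finset.coe_range, Set.mem_Iio] at h₁ h₂
  have hmem := fun m => Finset.ext_iff.mp h m
  have h0 := hmem 0
  have hg' := hmem g
  have hk₁ := hmem k₁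
  have hk₂ := hmem k₂
  simp only [gapProfile] at h0 hg' hk₁ hk₂
  split_ifs at h0 hg' hk₁ hk₂ <;> simp at h0 hg' hk₁ hk₂ <;> omega

theorem ConsecutiveOcc.sub_le_succ_of_minimal (hst : SturmianW w)
    (hmin : ∀ i j, ConsecutiveOcc w a i j → g ≤ j - i) {i j : ℕ} (hij : ConsecutiveOcc w a i j)
    {p : ℕ} (hp : ConsecutiveOcc w a p (p + g)) : j - i ≤ g + 1 := by
  by_contra! hbig
  have hg : 0 < g := by have := hp.2.2.1; omega
  obtain ⟨j', hjj'⟩ := exists_consecutiveOcc hst.1 hij.2.1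
  have hj' := hmin j j' hjj'
  have hocc : ∀ x, i ≤ x → x ≤ j' → (w x = a ↔ x = i ∨ x = j ∨ x = j') := by
    intro x hix hxj'
    rcases le_total x j with hxj | hjx
    · rw [hij.apply_eq_iff hix hxj]; omega
    · rw [hjj'.apply_eq_iff hjx hxj']; omega
  let pos : ℕ → ℕ := fun k =>
    if k = 0 then i else if k ≤ g then j - k else if k = g + 1 then i + 1 else p
  have hprofile : ∀ k < g + 3, occOffsets w a (pos k) (g + 1) = gapProfile g k := by
    intro k hk
    ext m
    rw [mem_occOffsets]
    by_cases hm : m < g + 1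
    swap
    · simp only [hm, false_and, false_iff, gapProfile]
      split_ifs <;> simp <;> omega
    rcases (by omega : k ≤ g + 1 ∨ k = g + 2) with hk | rfl
    · have hx : i ≤ pos k + m ∧ pos k + m ≤ j' := by simp only [pos]; split_ifs <;> omega
      rw [hocc _ hx.1 hx.2]
      simp only [pos, gapProfile]
      split_ifs <;> simp <;> omega
    · have hpos : pos (g + 2) = p := by simp [pos]
      rw [hpos, hp.apply_eq_iff (by omega) (by omega)]
      simp only [gapProfile]
      split_ifs <;> simp <;> omega
  have hcard := card_le_complexityW_of_injOn_occOffsets w a pos (Finset.range (g + 3)) (g + 1)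
    ((injOn_gapProfile hg).congr fun k hk => (hprofile k (by simpa using hk)).symm)
  rw [Finset.card_range, hst.2] at hcard
  omega

theorem exists_consecutiveOcc_add_succ (hst : SturmianW w)
    (hmin : ∀ i j, ConsecutiveOcc w a i j → g ≤ j - i) {p : ℕ} (hp : ConsecutiveOcc w a p (p + g)) :
    ∃ q, ConsecutiveOcc w a q (q + (g + 1)) := by
  by_contra! hno
  have hg : 0 < g := by have := hp.2.2.1; omega
  refine hst.1 (ultPeriodicW_of_consecutiveOcc_add hg hp.1 fun i _ hi => ?_)
  obtain ⟨j, hij⟩ := exists_consecutiveOcc hst.1 hi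
  have h₁ := hmin i j hij
  have h₂ := hij.sub_le_succ_of_minimal hst hmin hp
  rcases (by omega : j = i + g ∨ j = i + (g + 1)) with rfl | rfl
  · exact hij
  · exact absurd hij (hno i)

theorem returnWords_singleton_eq_pair (hst : SturmianW w)
    (hmin : ∀ i j, ConsecutiveOcc w a i j → g ≤ j - i) {p q : ℕ}
    (hp : ConsecutiveOcc w a p (p + g)) (hq : ConsecutiveOcc w a q (q + (g + 1))) :
    returnWords w [a] = {wordAt w p g, wordAt w q (g + 1)} := by
  rw [returnWords_singleton]
  ext r
  simp only [Set.mem_ofPred_eq, Set.mem_insert_iff, Set.mem_singleton_iff]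
  constructor
  · rintro ⟨i, j, hij, rfl⟩
    have h₁ := hmin i j hij
    have h₂ := hij.sub_le_succ_of_minimal hst hmin hp
    rcases (by omega : j - i = g ∨ j - i = g + 1) with h | h
    · left; simpa using hij.wordAt_eq hp (by omega)
    · right; simpa using hij.wordAt_eq hq (by omega)
  · rintro (rfl | rfl)
    · exact ⟨p, p + g, hp, by simp⟩
    · exact ⟨q, q + (g + 1), hq, by simp⟩

end Sturmian

theorem stmt18_general (w : ℕ → Bool) (hst : SturmianW w) (a : Bool) :
    ExactlyKSemiAbReturns w [a] 2 ∧ semiAbReturns w [a] = returnWords w [a] := by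
  classical
  have hgap : ∃ g p, ConsecutiveOcc w a p (p + g) := by
    obtain ⟨i, -, hi⟩ := exists_ge_apply_eq hst.1 a 0
    obtain ⟨j, hij⟩ := exists_consecutiveOcc hst.1 hi
    exact ⟨j - i, i, by rwa [Nat.add_sub_cancel' hij.2.2.1.le]⟩
  obtain ⟨p, hp⟩ := Nat.find_spec hgap
  have hmin : ∀ i j, ConsecutiveOcc w a i j → Nat.find hgap ≤ j - i := fun i j hij =>
    Nat.find_min' hgap ⟨i, by rwa [Nat.add_sub_cancel' hij.2.2.1.le]⟩
  obtain ⟨q, hq⟩ := exists_consecutiveOcc_add_succ hst hmin hp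
  have hne : wordAt w p (Nat.find hgap) ≠ wordAt w q (Nat.find hgap + 1) := fun h => by
    simpa using congrArg List.length h
  refine ⟨⟨![_, _], injective_pair_iff_ne.mpr hne, ?_⟩, semiAbReturns_singleton w a⟩
  rw [semiAbReturns_singleton, returnWords_singleton_eq_pair hst hmin hp hq,
    Matrix.range_cons_cons_empty]

/-- Each letter of a Sturmian word has exactly two semi-abelian returns, which coincide
with its ordinary return words. -/
theorem stmt18 (w : ℕ → Bool) (hst : SturmianW w) (a : Bool) (ha : IsFactorW w [a]) :
    ExactlyKSemiAbReturns w [a] 2 ∧ semiAbReturns w [a] = returnWords w [a] :=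
  stmt18_general w hst a
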